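/- arXiv:1707.05440 — 2 statements merged into one kernel-verified Lean document; each statement's English description precedes it below -/
import Mathlib

section
/- Let S be a set of n points in the plane in general position, and suppose some subset of h points of S is in convex position. Then S admits at least ⌊h/2⌋ pairwise edge-disjoint plane spanning trees. -/
/-- Points in the plane. -/
abbrev Pt : Type := ℝ × ℝ

/-- A finite point set is in general position if no three of its points are collinear. -/
def GenPos (S : Finset Pt) : Prop :=
  ∀ p ∈ S, ∀ q ∈ S, ∀ r ∈ S, p ≠ q → p ≠ r → q ≠ r →
    ¬ Collinear ℝ ({p, q, r} : Set Pt)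

/-- A geometric graph on `S` (a simple graph on the points of `S`, edges drawn as
straight segments) is plane if the open segments of any two distinct edges are disjoint. -/
def IsPlaneGraph {S : Finset Pt} (G : SimpleGraph {x // x ∈ S}) : Prop :=
  ∀ a b c d : {x // x ∈ S}, G.Adj a b → G.Adj c d → s(a, b) ≠ s(c, d) →
    openSegment ℝ (a : Pt) (b : Pt) ∩ openSegment ℝ (c : Pt) (d : Pt) = ∅

/-- A plane spanning tree of `S`: a tree on all points of `S` drawn without crossings. -/
def IsPlaneSpanningTree {S : Finset Pt} (G : SimpleGraph {x // x ∈ S}) : Prop :=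
  G.IsTree ∧ IsPlaneGraph G

/-- A plane spanning path of `S`: a plane spanning tree in which every vertex
has degree at most two (i.e. a plane Hamiltonian path). -/
def IsPlaneSpanningPath {S : Finset Pt} (G : SimpleGraph {x // x ∈ S}) : Prop :=
  IsPlaneSpanningTree G ∧
    ∀ v a b c : {x // x ∈ S}, G.Adj v a → G.Adj v b → G.Adj v c →
      (a = b ∨ a = c ∨ b = c)

/-- The open segment spanned by an unordered pair of points. -/
def segOpen (e : Sym2 Pt) : Set Pt :=
  Sym2.lift ⟨fun a b => openSegment ℝ a b, fun a b => openSegment_symm ℝ a b⟩ e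

/-- `F` is a crossing family in `S`: a set of nondegenerate segments with endpoints
in `S`, any two of which cross (their open segments intersect). -/
def IsCrossingFamily (S : Finset Pt) (F : Finset (Sym2 Pt)) : Prop :=
  (∀ e ∈ F, ¬ e.IsDiag ∧ ∀ x ∈ e, x ∈ S) ∧
  (∀ e ∈ F, ∀ f ∈ F, e ≠ f → (segOpen e ∩ segOpen f).Nonempty)

/-- `x` lies strictly to the left of the directed line from `p` to `q`. -/
def leftOf (p q x : Pt) : Prop :=
  0 < (q.1 - p.1) * (x.2 - p.2) - (q.2 - p.2) * (x.1 - p.1)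

/-- `x` lies strictly to the right of the directed line from `p` to `q`. -/
def rightOf (p q x : Pt) : Prop :=
  (q.1 - p.1) * (x.2 - p.2) - (q.2 - p.2) * (x.1 - p.1) < 0

/-- The double star on `S` associated with the directed edge `pq`: the edge `pq`,
the edges from `p` to all points strictly left of the directed line `pq`, and the
edges from `q` to all points strictly right of it. -/
def doubleStar (S : Finset Pt) (p q : Pt) : SimpleGraph {x // x ∈ S} :=
  SimpleGraph.fromRel fun a b =>
    ((a : Pt) = p ∧ (b : Pt) = q) ∨
    ((a : Pt) = p ∧ leftOf p q (b : Pt)) ∨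
    ((a : Pt) = q ∧ rightOf p q (b : Pt))

/-- The regular wheel configuration `W_{2n}`: `2n-1` points regularly spaced on the
unit circle together with its center. -/
noncomputable def wheel (n : ℕ) : Finset Pt :=
  insert ((0 : ℝ), (0 : ℝ)) <| (Finset.range (2 * n - 1)).image fun j : ℕ =>
    (Real.cos (2 * Real.pi * (j : ℝ) / ((2 * n - 1 : ℕ) : ℝ)),
     Real.sin (2 * Real.pi * (j : ℝ) / ((2 * n - 1 : ℕ) : ℝ)))

/-!
List the `h` points of `C` counterclockwise as `v 0, …, v (h - 1)` and let `m = ⌊h/2⌋`. For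
`i < m` take the double star on the diagonal `v i v (i + m)`: that diagonal, the edges from
`v i` to all points left of it and the edges from `v (i + m)` to all points right of it. In
general position this is a plane spanning tree: every vertex other than `v i` hangs from one
endpoint of the diagonal, and edges on opposite sides of the diagonal cannot meet. For `i < j`
the diagonals `v i v (i + m)` and `v j v (j + m)` cross, and double stars on crossing segments
share no edge.
-/

def cross (p q x : Pt) : ℝ := (q.1 - p.1) * (x.2 - p.2) - (q.2 - p.2) * (x.1 - p.1)

theorem leftOf_iff {p q x : Pt} : leftOf p q x ↔ 0 < cross p q x := Iff.rfl

theorem rightOf_iff {p q x : Pt} : rightOf p q x ↔ cross p q x < 0 := Iff.rfl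

@[simp] theorem cross_self_left (p x : Pt) : cross p p x = 0 := by simp only [cross]; ring

@[simp] theorem cross_self_mid (p q : Pt) : cross p q p = 0 := by simp only [cross]; ring

@[simp] theorem cross_self_right (p q : Pt) : cross p q q = 0 := by simp only [cross]; ring

theorem cross_swap (p q x : Pt) : cross p x q = -cross p q x := by simp only [cross]; ring

theorem cross_rotate (p q x : Pt) : cross q x p = cross p q x := by simp only [cross]; ring

theorem ne_of_cross_pos {p q x : Pt} (h : 0 < cross p q x) : p ≠ q ∧ x ≠ p ∧ x ≠ q := by
  refine ⟨?_, ?_, ?_⟩ <;> rintro rfl <;> simp at h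

theorem ne_of_cross_neg {p q x : Pt} (h : cross p q x < 0) : p ≠ q ∧ x ≠ p ∧ x ≠ q := by
  refine ⟨?_, ?_, ?_⟩ <;> rintro rfl <;> simp at h

theorem cross_affineCombination (p q a b : Pt) {u v : ℝ} (huv : u + v = 1) :
    cross p q (u • a + v • b) = u * cross p q a + v * cross p q b := by
  obtain rfl : v = 1 - u := by linarith
  simp only [cross, Prod.smul_fst, Prod.smul_snd, Prod.fst_add, Prod.snd_add, smul_eq_mul]
  ring

theorem exists_cross_eq_of_mem_openSegment (p q : Pt) {a b z : Pt}
    (hz : z ∈ openSegment ℝ a b) :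
    ∃ u v : ℝ, 0 < u ∧ 0 < v ∧ cross p q z = u * cross p q a + v * cross p q b := by
  obtain ⟨u, v, hu, hv, huv, rfl⟩ := hz
  exact ⟨u, v, hu, hv, cross_affineCombination p q a b huv⟩

theorem collinear_of_cross_eq_zero {p q x : Pt} (hpq : p ≠ q) (h : cross p q x = 0) :
    Collinear ℝ ({p, q, x} : Set Pt) := by
  have hd : (q.1 - p.1) ^ 2 + (q.2 - p.2) ^ 2 ≠ 0 := by
    intro h0
    exact hpq (Prod.ext (by nlinarith [sq_nonneg (q.1 - p.1), sq_nonneg (q.2 - p.2)])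
      (by nlinarith [sq_nonneg (q.1 - p.1), sq_nonneg (q.2 - p.2)]))
  -- `x` is its own orthogonal projection onto the line `pq`
  set t := ((x.1 - p.1) * (q.1 - p.1) + (x.2 - p.2) * (q.2 - p.2)) /
    ((q.1 - p.1) ^ 2 + (q.2 - p.2) ^ 2)
  have hx : AffineMap.lineMap p q t = x := by
    simp only [cross] at h
    rw [AffineMap.lineMap_apply]
    ext <;> simp only [vsub_eq_sub, vadd_eq_add, Prod.smul_fst, Prod.smul_snd, Prod.fst_add,
      Prod.snd_add, Prod.fst_sub, Prod.snd_sub, smul_eq_mul, t] <;> field_simp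
    · linear_combination (q.2 - p.2) * h
    · linear_combination -(q.1 - p.1) * h
  rw [Set.pair_comm q x, Set.insert_comm p x]
  exact collinear_insert_of_mem_affineSpan_pair
    (hx ▸ AffineMap.lineMap_mem_affineSpan_pair t p q)

theorem GenPos.mono {S T : Finset Pt} (hS : GenPos S) (hTS : T ⊆ S) : GenPos T :=
  fun p hp q hq r hr => hS p (hTS hp) q (hTS hq) r (hTS hr)

theorem GenPos.cross_ne_zero {S : Finset Pt} (hS : GenPos S) {p q x : Pt} (hp : p ∈ S)
    (hq : q ∈ S) (hx : x ∈ S) (hpq : p ≠ q) (hpx : p ≠ x) (hqx : q ≠ x) : cross p q x ≠ 0 :=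
  fun h => hS p hp q hq x hx hpq hpx hqx (collinear_of_cross_eq_zero hpq h)

theorem openSegment_inter_openSegment_of_cross_ne_zero {a b c : Pt} (h : cross a b c ≠ 0) :
    openSegment ℝ a b ∩ openSegment ℝ a c = ∅ := by
  refine Set.eq_empty_of_forall_notMem fun z ⟨hzb, hzc⟩ => ?_
  obtain ⟨u, v, -, -, hz⟩ := exists_cross_eq_of_mem_openSegment a b hzb
  obtain ⟨u', v', -, hv', hz'⟩ := exists_cross_eq_of_mem_openSegment a b hzc
  simp only [cross_self_mid, cross_self_right, mul_zero, add_zero, zero_add] at hz hz'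
  exact mul_ne_zero hv'.ne' h (hz' ▸ hz)

namespace SimpleGraph

variable {V : Type*} {G : SimpleGraph V}

theorem isTree_of_parent [Finite V] (root : V) (parent : V → V) (rank : V → ℕ)
    (hrank : ∀ x, x ≠ root → rank (parent x) < rank x)
    (hadj : ∀ a b, G.Adj a b ↔ (b ≠ root ∧ a = parent b) ∨ (a ≠ root ∧ b = parent a)) :
    G.IsTree := by
  have hconn : G.Connected := by
    refine (connected_iff_exists_forall_reachable G).2 ⟨root, fun x => ?_⟩
    induction hx : rank x using Nat.strong_induction_on generalizing x with
    | _ n ih =>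
      by_cases hxr : x = root
      · rw [hxr]
      · have hpx : G.Adj (parent x) x := (hadj _ _).2 (Or.inl ⟨hxr, rfl⟩)
        exact (ih _ (hx ▸ hrank x hxr) _ rfl).trans hpx.reachable
  let edge : {x // x ≠ root} → G.edgeSet := fun x =>
    ⟨s(x, parent x), (hadj _ _).2 (Or.inr ⟨x.2, rfl⟩)⟩
  have hedge : Function.Bijective edge := by
    constructor
    · rintro ⟨x, hx⟩ ⟨y, hy⟩ hxy
      replace hxy : s(x, parent x) = s(y, parent y) := congrArg Subtype.val hxy
      rcases Sym2.eq_iff.1 hxy with ⟨rfl, -⟩ | ⟨hxy, hyx⟩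
      · rfl
      · have hx' := hrank x hx
        have hy' := hrank y hy
        rw [hyx] at hx'
        rw [← hxy] at hy'
        omega
    · rintro ⟨e, he⟩
      induction e with
      | h a b =>
        rcases (hadj a b).1 he with ⟨hb, rfl⟩ | ⟨ha, rfl⟩
        · exact ⟨⟨b, hb⟩, Subtype.ext Sym2.eq_swap⟩
        · exact ⟨⟨a, ha⟩, rfl⟩
  refine isTree_iff_connected_and_card.2 ⟨hconn, ?_⟩
  classical
  have := Fintype.ofFinite V
  have : Nonempty V := ⟨root⟩
  rw [← Nat.card_eq_of_bijective edge hedge, Nat.card_eq_fintype_card, Nat.card_eq_fintype_card,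
    Fintype.card_subtype_compl, Fintype.card_subtype_eq]
  exact Nat.sub_add_cancel Fintype.card_pos

end SimpleGraph

section DoubleStar

variable {S : Finset Pt} {p q x : Pt}

local notation "V" => {x // x ∈ S}

noncomputable def starParent (p q x : Pt) : Pt := if cross p q x < 0 then q else p

theorem starParent_of_cross_neg (h : cross p q x < 0) : starParent p q x = q := if_pos h

theorem starParent_of_cross_pos (h : 0 < cross p q x) : starParent p q x = p :=
  if_neg (not_lt.2 h.le)

theorem starParent_eq_or (p q x : Pt) : starParent p q x = p ∨ starParent p q x = q := by
  unfold starParent; split_ifs <;> simp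

theorem starParent_mem (hp : p ∈ S) (hq : q ∈ S) (x : Pt) : starParent p q x ∈ S := by
  rcases starParent_eq_or p q x with h | h <;> rw [h] <;> assumption

theorem starParent_ne (hx : x ≠ p) : starParent p q x ≠ x := by
  unfold starParent
  split_ifs with h
  · exact ((ne_of_cross_neg h).2.2).symm
  · exact hx.symm

theorem doubleStar_rel_iff (hS : GenPos S) (hp : p ∈ S) (hq : q ∈ S) (hpq : p ≠ q) {a b : Pt}
    (hb : b ∈ S) :
    ((a = p ∧ b = q) ∨ (a = p ∧ leftOf p q b) ∨ (a = q ∧ rightOf p q b)) ↔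
      b ≠ p ∧ a = starParent p q b := by
  constructor
  · rintro (⟨rfl, rfl⟩ | ⟨rfl, hl⟩ | ⟨rfl, hr⟩)
    · exact ⟨hpq.symm, by simp [starParent]⟩
    · exact ⟨(ne_of_cross_pos hl).2.1, (starParent_of_cross_pos hl).symm⟩
    · exact ⟨(ne_of_cross_neg hr).2.1, (starParent_of_cross_neg hr).symm⟩
  · rintro ⟨hbp, rfl⟩
    by_cases hr : cross p q b < 0
    · exact Or.inr (Or.inr ⟨starParent_of_cross_neg hr, hr⟩)
    by_cases hbq : b = q
    · exact Or.inl ⟨by simp [starParent, hbq], hbq⟩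
    have hb₀ := hS.cross_ne_zero hp hq hb hpq (Ne.symm hbp) (Ne.symm hbq)
    have hl : leftOf p q b := lt_of_le_of_ne (not_lt.1 hr) hb₀.symm
    exact Or.inr (Or.inl ⟨starParent_of_cross_pos hl, hl⟩)

theorem doubleStar_adj_iff (hS : GenPos S) (hp : p ∈ S) (hq : q ∈ S) (hpq : p ≠ q) {a b : V} :
    (doubleStar S p q).Adj a b ↔
      ((b : Pt) ≠ p ∧ (a : Pt) = starParent p q b) ∨
        ((a : Pt) ≠ p ∧ (b : Pt) = starParent p q a) := by
  rw [doubleStar, SimpleGraph.fromRel_adj, doubleStar_rel_iff hS hp hq hpq b.2,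
    doubleStar_rel_iff hS hp hq hpq a.2, and_iff_right_iff_imp]
  rintro (⟨hb, ha⟩ | ⟨ha, hb⟩) rfl
  · exact starParent_ne hb ha.symm
  · exact starParent_ne ha hb.symm

theorem doubleStar_isTree (hS : GenPos S) (hp : p ∈ S) (hq : q ∈ S) (hpq : p ≠ q) :
    (doubleStar S p q).IsTree := by
  refine SimpleGraph.isTree_of_parent ⟨p, hp⟩
    (fun x => ⟨starParent p q x, starParent_mem hp hq x⟩)
    (fun x => if (x : Pt) = p then 0 else if (x : Pt) = q then 1 else 2) ?_ ?_
  · rintro ⟨x, hx⟩ hxp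
    replace hxp : x ≠ p := fun h => hxp (Subtype.ext h)
    by_cases hr : cross p q x < 0
    · simp [starParent, hr, hxp, (ne_of_cross_neg hr).2.2, hpq.symm]
    · simp only [starParent, hr, hxp, if_false, if_true]
      split_ifs <;> omega
  · intro a b
    simp only [doubleStar_adj_iff hS hp hq hpq, ne_eq, Subtype.ext_iff]

theorem exists_eq_starParent_of_doubleStar_adj (hS : GenPos S) (hp : p ∈ S) (hq : q ∈ S)
    (hpq : p ≠ q) {a b : V} (h : (doubleStar S p q).Adj a b) :
    ∃ x : V, (x : Pt) ≠ p ∧ s((a : Pt), (b : Pt)) = s(starParent p q x, (x : Pt)) := by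
  rcases (doubleStar_adj_iff hS hp hq hpq).1 h with ⟨hb, ha⟩ | ⟨ha, hb⟩
  · exact ⟨b, hb, by rw [ha]⟩
  · exact ⟨a, ha, by rw [hb, Sym2.eq_swap]⟩

theorem openSegment_starParent_inter (hS : GenPos S) (hp : p ∈ S) (hq : q ∈ S) {x y : Pt}
    (hx : x ∈ S) (hy : y ∈ S) (hxp : x ≠ p) (hyp : y ≠ p) (hxy : x ≠ y) :
    openSegment ℝ (starParent p q x) x ∩ openSegment ℝ (starParent p q y) y = ∅ := by
  -- the edges at `q` lie strictly right of the line `pq`, those at `p` weakly left of it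
  have sides : ∀ x y, cross p q x < 0 → ¬ cross p q y < 0 →
      openSegment ℝ q x ∩ openSegment ℝ p y = ∅ := by
    refine fun x y hx hy => Set.eq_empty_of_forall_notMem fun z ⟨hzx, hzy⟩ => ?_
    obtain ⟨u, v, -, hv, hz⟩ := exists_cross_eq_of_mem_openSegment p q hzx
    obtain ⟨u', v', -, hv', hz'⟩ := exists_cross_eq_of_mem_openSegment p q hzy
    simp only [cross_self_mid, cross_self_right, mul_zero, zero_add] at hz hz'
    nlinarith
  unfold starParent
  split_ifs with hrx hry hry
  · exact openSegment_inter_openSegment_of_cross_ne_zero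
      (hS.cross_ne_zero hq hx hy (ne_of_cross_neg hrx).2.2.symm (ne_of_cross_neg hry).2.2.symm
        hxy)
  · exact sides x y hrx hry
  · exact Set.inter_comm _ _ ▸ sides y x hry hrx
  · exact openSegment_inter_openSegment_of_cross_ne_zero
      (hS.cross_ne_zero hp hx hy hxp.symm hyp.symm hxy)

theorem doubleStar_isPlaneGraph (hS : GenPos S) (hp : p ∈ S) (hq : q ∈ S) (hpq : p ≠ q) :
    IsPlaneGraph (doubleStar S p q) := by
  intro a b c d hab hcd hne
  obtain ⟨x, hxp, hx⟩ := exists_eq_starParent_of_doubleStar_adj hS hp hq hpq hab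
  obtain ⟨y, hyp, hy⟩ := exists_eq_starParent_of_doubleStar_adj hS hp hq hpq hcd
  have hxy : (x : Pt) ≠ y := by
    refine fun hxy => hne (Sym2.map.injective Subtype.val_injective ?_)
    simp only [Sym2.map_mk, hx, hy, hxy]
  change segOpen s((a : Pt), (b : Pt)) ∩ segOpen s((c : Pt), (d : Pt)) = ∅
  rw [hx, hy]
  exact openSegment_starParent_inter hS hp hq x.2 y.2 hxp hyp hxy

theorem doubleStar_isPlaneSpanningTree (hS : GenPos S) (hp : p ∈ S) (hq : q ∈ S)
    (hpq : p ≠ q) : IsPlaneSpanningTree (doubleStar S p q) :=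
  ⟨doubleStar_isTree hS hp hq hpq, doubleStar_isPlaneGraph hS hp hq hpq⟩

theorem eq_starParent_of_doubleStar_adj (hS : GenPos S) (hp : p ∈ S) (hq : q ∈ S) (hpq : p ≠ q)
    {a x : V} (hxp : (x : Pt) ≠ p) (hxq : (x : Pt) ≠ q) (h : (doubleStar S p q).Adj a x) :
    (a : Pt) = starParent p q x := by
  refine (((doubleStar_adj_iff hS hp hq hpq).1 h).resolve_right fun ⟨_, hx⟩ => ?_).2
  unfold starParent at hx
  split_ifs at hx <;> contradiction

/-- `h₁`–`h₄` say that the segments `pq` and `p'q'` cross. An edge of the first double star has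
an endpoint `p` or `q`, which is a leaf of the second one hanging from `p'` resp. `q'`; but in
the first double star `p'` hangs from `q` and `q'` from `p`. -/
theorem disjoint_edgeSet_doubleStar (hS : GenPos S) {p' q' : Pt} (hp : p ∈ S) (hq : q ∈ S)
    (hp' : p' ∈ S) (hq' : q' ∈ S) (h₁ : rightOf p q p') (h₂ : leftOf p q q')
    (h₃ : leftOf p' q' p) (h₄ : rightOf p' q' q) :
    Disjoint (doubleStar S p q).edgeSet (doubleStar S p' q').edgeSet := by
  obtain ⟨hpq, hp'p, hp'q⟩ := ne_of_cross_neg h₁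
  obtain ⟨-, hq'p, hq'q⟩ := ne_of_cross_pos h₂
  obtain ⟨hp'q', hpp', hpq'⟩ := ne_of_cross_pos h₃
  obtain ⟨-, hqp', hqq'⟩ := ne_of_cross_neg h₄
  refine Set.disjoint_left.2 fun e he he' => ?_
  induction e with
  | h a b =>
  wlog ha : (a : Pt) = p ∨ (a : Pt) = q generalizing a b
  · obtain ⟨x, -, hx⟩ := exists_eq_starParent_of_doubleStar_adj hS hp hq hpq he
    refine this b a (Sym2.eq_swap ▸ he) (Sym2.eq_swap ▸ he') ?_
    rcases Sym2.eq_iff.1 hx with ⟨ha', -⟩ | ⟨-, hb'⟩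
    · exact absurd (ha' ▸ starParent_eq_or p q x) ha
    · exact hb' ▸ starParent_eq_or p q x
  rcases ha with ha | ha
  · have hb : (b : Pt) = p' := by
      rw [eq_starParent_of_doubleStar_adj hS hp' hq' hp'q' (ha ▸ hpp') (ha ▸ hpq') he'.symm, ha,
        starParent_of_cross_pos h₃]
    have := eq_starParent_of_doubleStar_adj hS hp hq hpq (hb ▸ hp'p) (hb ▸ hp'q) he
    exact hpq (by rwa [hb, ha, starParent_of_cross_neg h₁] at this)
  · have hb : (b : Pt) = q' := by
      rw [eq_starParent_of_doubleStar_adj hS hp' hq' hp'q' (ha ▸ hqp') (ha ▸ hqq') he'.symm, ha,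
        starParent_of_cross_neg h₄]
    have := eq_starParent_of_doubleStar_adj hS hp hq hpq (hb ▸ hq'p) (hb ▸ hq'q) he
    exact hpq (by rwa [hb, ha, starParent_of_cross_pos h₂, eq_comm] at this)

end DoubleStar

theorem exists_fin_equiv_of_isStrictTotalOrder {α : Type*} [Fintype α] (r : α → α → Prop)
    [IsStrictTotalOrder α r] : ∃ e : Fin (Fintype.card α) ≃ α, ∀ i j, i < j → r (e i) (e j) := by
  classical
  let _ : LinearOrder α := linearOrderOfSTO r
  exact ⟨(Fintype.orderIsoFinOfCardEq α rfl).toEquiv,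
    fun i j h => (Fintype.orderIsoFinOfCardEq α rfl).strictMono h⟩

/-- The hypotheses put the directions `x - o`, `y - o`, `z - o` in one half-plane, on which
"counterclockwise of" is transitive. -/
theorem cross_pos_trans {o x y z : Pt} (hx : toLex o < toLex x) (hy : toLex o < toLex y)
    (hz : toLex o < toLex z) (hxy : 0 < cross o x y) (hyz : 0 < cross o y z) :
    0 < cross o x z := by
  rw [Prod.Lex.toLex_lt_toLex] at hx hy hz
  have hz₁ : o.1 ≤ z.1 := by rcases hz with h | h; exacts [h.le, h.1.le]
  rcases hy with hy₁ | ⟨hy₁, hy₂⟩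
  · have hx₁ : o.1 < x.1 := by
      refine hx.resolve_right fun ⟨hx₁, hx₂⟩ => ?_
      simp only [cross, ← hx₁] at hxy
      nlinarith
    have key : (y.1 - o.1) * cross o x z =
        (x.1 - o.1) * cross o y z + (z.1 - o.1) * cross o x y := by
      simp only [cross]; ring
    refine pos_of_mul_pos_right (key ▸ ?_) (by linarith : 0 ≤ y.1 - o.1)
    exact add_pos_of_pos_of_nonneg (mul_pos (by linarith) hyz) (mul_nonneg (by linarith) hxy.le)
  · simp only [cross, ← hy₁] at hyz
    nlinarith

theorem mem_convexHull_of_cross_neg {o x y z : Pt} (hxy : 0 < cross o x y)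
    (hyz : 0 < cross o y z) (hxyz : cross x y z < 0) : y ∈ convexHull ℝ {o, x, z} := by
  -- barycentric coordinates of `y` in the triangle `o x z`
  set Δ := cross o x y + cross o y z - cross x y z
  have hΔ : 0 < Δ := by linarith
  let w : Fin 3 → ℝ := ![-cross x y z / Δ, cross o y z / Δ, cross o x y / Δ]
  have hw : ∀ i ∈ Finset.univ, 0 ≤ w i := by
    intro i _
    fin_cases i <;> simp only [Fin.reduceFinMk, Matrix.cons_val, w]
    exacts [div_nonneg (by linarith) hΔ.le, div_nonneg hyz.le hΔ.le, div_nonneg hxy.le hΔ.le]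
  have hw1 : ∑ i, w i = 1 := by
    simp only [Fin.sum_univ_three, Fin.isValue, Matrix.cons_val, w]
    field_simp
    ring
  convert (convex_convexHull ℝ ({o, x, z} : Set Pt)).sum_mem hw hw1
    (z := ![o, x, z]) (fun i _ => subset_convexHull ℝ _ (by fin_cases i <;> simp)) using 1
  ext <;> simp only [Fin.sum_univ_three, Fin.isValue, Matrix.cons_val, Prod.fst_add, Prod.snd_add,
    Prod.smul_fst, Prod.smul_snd, smul_eq_mul, w] <;> field_simp <;> simp only [Δ, cross] <;> ring

def CcwOrdered {N : ℕ} (v : Fin N → Pt) : Prop :=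
  ∀ a b c, a < b → b < c → 0 < cross (v a) (v b) (v c)

theorem cross_pos_of_convexIndependent {D : Finset Pt} (hS : GenPos D)
    (hD : ConvexIndependent ℝ (fun x : (D : Set Pt) => (x : Pt))) {o x y z : Pt} (ho : o ∈ D)
    (hx : x ∈ D) (hy : y ∈ D) (hz : z ∈ D) (hxy : 0 < cross o x y) (hyz : 0 < cross o y z) :
    0 < cross x y z := by
  obtain ⟨-, hyo, hyx⟩ := ne_of_cross_pos hxy
  obtain ⟨-, -, hzy⟩ := ne_of_cross_pos hyz
  have hxz : x ≠ z := by rintro rfl; rw [cross_swap] at hyz; linarith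
  refine lt_of_le_of_ne (not_lt.1 fun hneg => ?_)
    (hS.cross_ne_zero hx hy hz hyx.symm hxz hzy.symm).symm
  refine convexIndependent_set_iff_notMem_convexHull_sdiff.1 hD y hy
    (convexHull_mono ?_ (mem_convexHull_of_cross_neg hxy hyz hneg))
  rintro w (rfl | rfl | rfl) <;> simp [ho, hx, hz, hyo.symm, hyx.symm, hzy]

theorem exists_ccwOrdered {D : Finset Pt} (hS : GenPos D)
    (hD : ConvexIndependent ℝ (fun x : (D : Set Pt) => (x : Pt))) :
    ∃ v : Fin D.card → Pt, Function.Injective v ∧ (∀ i, v i ∈ D) ∧ CcwOrdered v := by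
  rcases D.eq_empty_or_nonempty with rfl | hne
  · exact ⟨Fin.elim0, fun i => i.elim0, fun i => i.elim0, fun i => i.elim0⟩
  -- list the other points by angle around the lexicographically smallest one
  obtain ⟨o, ho, hmin⟩ := D.exists_min_image toLex hne
  let E := {x // x ∈ D.erase o}
  have hE : ∀ x : E, (x : Pt) ∈ D ∧ (x : Pt) ≠ o := fun x =>
    ⟨Finset.mem_of_mem_erase x.2, Finset.ne_of_mem_erase x.2⟩
  have hlex : ∀ x : E, toLex o < toLex (x : Pt) := fun x =>
    (hmin x (hE x).1).lt_of_ne (toLex.injective.ne (hE x).2.symm)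
  let r : E → E → Prop := fun x y => 0 < cross o x y
  have : IsStrictTotalOrder E r :=
    { irrefl := fun x => by simp [r]
      trans := fun x y z => cross_pos_trans (hlex x) (hlex y) (hlex z)
      trichotomous := fun x y hxy hyx => by
        by_contra hne
        have := hS.cross_ne_zero ho (hE x).1 (hE y).1 (hE x).2.symm (hE y).2.symm
          (Subtype.coe_injective.ne hne)
        simp only [r, cross_swap o x y] at hxy hyx
        rcases this.lt_or_gt with h | h <;> linarith }
  obtain ⟨e, he⟩ := exists_fin_equiv_of_isStrictTotalOrder r
  have hcard : D.card = Fintype.card E + 1 := by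
    rw [Fintype.card_coe, Finset.card_erase_add_one ho]
  rw [hcard]
  refine ⟨Fin.cons o fun i => e i, ?_, Fin.cases ho fun i => (hE (e i)).1, ?_⟩
  · exact Fin.cons_injective_iff.2
      ⟨fun ⟨i, hi⟩ => (hE (e i)).2 hi, Subtype.val_injective.comp e.injective⟩
  · intro a b c hab hbc
    obtain ⟨b, rfl⟩ := Fin.exists_succ_eq.2 (Fin.ne_zero_of_lt hab)
    obtain ⟨c, rfl⟩ := Fin.exists_succ_eq.2 (Fin.ne_zero_of_lt hbc)
    rw [Fin.succ_lt_succ_iff] at hbc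
    induction a using Fin.cases with
    | zero => exact he b c hbc
    | succ a =>
      rw [Fin.succ_lt_succ_iff] at hab
      exact cross_pos_of_convexIndependent hS hD ho (hE _).1 (hE _).1 (hE _).1 (he a b hab)
        (he b c hbc)

/-- The diagonals `v a v a'` and `v b v b'` of a convex polygon cross when `a < b < a' < b'`. -/
theorem CcwOrdered.disjoint_edgeSet_doubleStar {S : Finset Pt} {N : ℕ} {v : Fin N → Pt}
    (hv : CcwOrdered v) (hS : GenPos S) (hvS : ∀ i, v i ∈ S) {a b a' b' : Fin N} (hab : a < b)
    (hba' : b < a') (ha'b' : a' < b') :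
    Disjoint (doubleStar S (v a) (v a')).edgeSet (doubleStar S (v b) (v b')).edgeSet := by
  refine _root_.disjoint_edgeSet_doubleStar hS (hvS a) (hvS a') (hvS b) (hvS b') ?_
    (hv a a' b' (hab.trans hba') ha'b') ?_ ?_
  · rw [rightOf_iff, ← neg_pos, ← cross_swap]
    exact hv a b a' hab hba'
  · rw [leftOf_iff, cross_rotate]
    exact hv a b b' hab (hba'.trans ha'b')
  · rw [rightOf_iff, ← neg_pos, ← cross_swap]
    exact hv b a' b' hba' ha'b'

theorem convex_subset_gives_trees_general (S C : Finset Pt) (h : ℕ)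
    (hgp : GenPos S) (hCS : C ⊆ S) (hC : C.card = h)
    (hconv : ConvexIndependent ℝ (fun x : (C : Set Pt) => (x : Pt))) :
    ∃ T : Fin (h / 2) → SimpleGraph {x // x ∈ S},
      (∀ i, IsPlaneSpanningTree (T i)) ∧
      (∀ i j, i ≠ j → Disjoint (T i).edgeSet (T j).edgeSet) := by
  subst hC
  obtain ⟨v, hv_inj, hvC, hv⟩ := exists_ccwOrdered (hgp.mono hCS) hconv
  have hvS : ∀ i, v i ∈ S := fun i => hCS (hvC i)
  let lo (i : Fin (C.card / 2)) : Fin C.card := ⟨i, by omega⟩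
  let hi (i : Fin (C.card / 2)) : Fin C.card := ⟨i + C.card / 2, by omega⟩
  refine ⟨fun i => doubleStar S (v (lo i)) (v (hi i)), fun i => ?_, fun i j hij => ?_⟩
  · exact doubleStar_isPlaneSpanningTree hgp (hvS _) (hvS _)
      (hv_inj.ne fun h => by simp only [lo, hi, Fin.mk.injEq] at h; omega)
  · wlog hlt : i < j generalizing i j
    · exact (this j i hij.symm (lt_of_le_of_ne (not_lt.1 hlt) hij.symm)).symm
    exact hv.disjoint_edgeSet_doubleStar hgp hvS (Fin.mk_lt_mk.2 hlt)
      (Fin.mk_lt_mk.2 (by omega)) (Fin.mk_lt_mk.2 (by omega))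

/-- If `h` points of `S` are in convex position, then `S` admits at least
`⌊h/2⌋` pairwise edge-disjoint plane spanning trees. -/
theorem convex_subset_gives_trees (S C : Finset Pt) (n h : ℕ)
    (hS : S.card = n) (hgp : GenPos S) (hCS : C ⊆ S) (hC : C.card = h)
    (hconv : ConvexIndependent ℝ (fun x : (C : Set Pt) => (x : Pt))) :
    ∃ T : Fin (h / 2) → SimpleGraph {x // x ∈ S},
      (∀ i, IsPlaneSpanningTree (T i)) ∧
      (∀ i j, i ≠ j → Disjoint (T i).edgeSet (T j).edgeSet) :=
  convex_subset_gives_trees_general S C h hgp hCS hC hconv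
end

section
/- Every set S of n ≥ 4 points in the plane in general position admits at least 2 pairwise edge-disjoint plane spanning trees. -/
/-!
If two segments `pq` and `rs` spanned by `S` cross, with `r` left of `pq` and `q` left of `rs`,
the double stars on `pq` and on `rs` are plane spanning trees. They are edge-disjoint: every edge
of the second one has an endpoint in `{r, s}`, but in the first one `r` hangs from `p` and `s`
from `q`, while in the second one `p` hangs from `s` and `q` from `r`.

If no two segments spanned by `S` cross, then the complete geometric graph on `S` is plane, as
segments sharing an endpoint cannot overlap in general position. Then any two edge-disjoint
spanning trees of `K_n`, which exist for `n ≥ 4`, will do.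
-/

def orient (p q x : Pt) : ℝ := (q.1 - p.1) * (x.2 - p.2) - (q.2 - p.2) * (x.1 - p.1)

lemma leftOf_iff_orient {p q x : Pt} : leftOf p q x ↔ 0 < orient p q x := Iff.rfl

lemma rightOf_iff_orient {p q x : Pt} : rightOf p q x ↔ orient p q x < 0 := Iff.rfl

section Orientation

variable {p q x y : Pt}

@[simp] lemma orient_self_left : orient p q p = 0 := by simp [orient]

@[simp] lemma orient_self_right : orient p q q = 0 := by rw [orient]; ring

@[simp] lemma orient_self : orient p p x = 0 := by simp [orient]

lemma orient_swap : orient q p x = -orient p q x := by simp only [orient]; ring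

lemma orient_add_smul {a b : ℝ} (hab : a + b = 1) :
    orient p q (a • x + b • y) = a * orient p q x + b * orient p q y := by
  obtain rfl : b = 1 - a := by linarith
  simp only [orient, Prod.fst_add, Prod.snd_add, Prod.smul_fst, Prod.smul_snd, smul_eq_mul]
  ring

lemma collinear_of_orient_eq_zero (h : orient p q x = 0) :
    Collinear ℝ ({p, q, x} : Set Pt) := by
  by_cases hpq : p = q
  · subst hpq
    simpa using collinear_pair ℝ p x
  have hn : (q.1 - p.1) ^ 2 + (q.2 - p.2) ^ 2 ≠ 0 := by
    intro h0
    exact hpq (Prod.ext (by nlinarith [sq_nonneg (q.1 - p.1), sq_nonneg (q.2 - p.2)])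
      (by nlinarith [sq_nonneg (q.1 - p.1), sq_nonneg (q.2 - p.2)]))
  rw [collinear_iff_of_mem (Set.mem_insert p _)]
  refine ⟨q - p, ?_⟩
  simp only [Set.mem_insert_iff, Set.mem_singleton_iff, forall_eq_or_imp, forall_eq]
  -- `x - p` is its own orthogonal projection onto the line spanned by `q - p`
  refine ⟨⟨0, by simp⟩, ⟨1, by simp⟩, ⟨((x.1 - p.1) * (q.1 - p.1) + (x.2 - p.2) * (q.2 - p.2)) /
    ((q.1 - p.1) ^ 2 + (q.2 - p.2) ^ 2), ?_⟩⟩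
  simp only [orient] at h
  ext <;> simp only [vadd_eq_add, Prod.fst_add, Prod.snd_add, Prod.smul_fst, Prod.smul_snd,
    Prod.fst_sub, Prod.snd_sub, smul_eq_mul] <;> field_simp
  · linear_combination -(q.2 - p.2) * h
  · linear_combination (q.1 - p.1) * h

lemma GenPos.orient_ne_zero {S : Finset Pt} (hgp : GenPos S) (hp : p ∈ S) (hq : q ∈ S)
    (hx : x ∈ S) (hpq : p ≠ q) (hpx : p ≠ x) (hqx : q ≠ x) : orient p q x ≠ 0 :=
  fun h => hgp p hp q hq x hx hpq hpx hqx (collinear_of_orient_eq_zero h)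

end Orientation

def Crosses (p q r s : Pt) : Prop :=
  leftOf p q r ∧ rightOf p q s ∧ leftOf r s q ∧ rightOf r s p

section Segments

variable {u v a b c d p q r s x y z : Pt}

lemma openSegment_inter_eq_empty_of_orient (ha : 0 ≤ orient u v a) (hb : 0 ≤ orient u v b)
    (hc : orient u v c ≤ 0) (hd : orient u v d < 0) :
    openSegment ℝ a b ∩ openSegment ℝ c d = ∅ := by
  refine Set.eq_empty_of_forall_notMem
    fun z ⟨⟨s, t, hs, ht, hst, hz⟩, ⟨s', t', hs', ht', hst', hz'⟩⟩ => ?_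
  have h₁ : orient u v z = s * orient u v a + t * orient u v b := by
    rw [← hz, orient_add_smul hst]
  have h₂ : orient u v z = s' * orient u v c + t' * orient u v d := by
    rw [← hz', orient_add_smul hst']
  nlinarith [mul_nonneg hs.le ha, mul_nonneg ht.le hb, mul_nonpos_of_nonneg_of_nonpos hs'.le hc,
    mul_neg_of_pos_of_neg ht' hd]

lemma openSegment_inter_eq_empty_of_orient_ne_zero (h : orient p x y ≠ 0) :
    openSegment ℝ p x ∩ openSegment ℝ p y = ∅ := by
  rcases h.lt_or_gt with h | h
  · exact openSegment_inter_eq_empty_of_orient (u := p) (v := x) (by simp) (by simp) (by simp) h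
  · exact openSegment_inter_eq_empty_of_orient (u := x) (v := p) (by simp) (by simp) (by simp)
      (by rw [orient_swap]; linarith)

lemma crosses_or_crosses_of_mem_openSegment (hz₁ : z ∈ openSegment ℝ p q)
    (hz₂ : z ∈ openSegment ℝ r s) (hp : orient r s p ≠ 0) (hr : orient p q r ≠ 0) :
    Crosses p q r s ∨ Crosses p q s r := by
  obtain ⟨a, b, ha, hb, hab, rfl⟩ := hz₁
  obtain ⟨c, d, hc, hd, hcd, hz⟩ := hz₂
  have hpq : c * orient p q r + d * orient p q s = 0 := by
    rw [← orient_add_smul hcd, hz, orient_add_smul hab]; simp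
  have hrs : a * orient r s p + b * orient r s q = 0 := by
    rw [← orient_add_smul hab, ← hz, orient_add_smul hcd]; simp
  have key : orient p q r - orient p q s = orient r s q - orient r s p := by
    simp only [orient]; ring
  simp only [Crosses, leftOf_iff_orient, rightOf_iff_orient, orient_swap (p := r)]
  rcases hr.lt_or_gt with hr | hr
  · have hs : 0 < orient p q s := by nlinarith
    have hp : 0 < orient r s p := hp.lt_or_gt.resolve_left fun hp => by nlinarith
    exact Or.inr ⟨hs, hr, by nlinarith, by linarith⟩
  · have hs : orient p q s < 0 := by nlinarith
    have hp : orient r s p < 0 := hp.lt_or_gt.resolve_right fun hp => by nlinarith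
    exact Or.inl ⟨hr, hs, by nlinarith, hp⟩

end Segments

namespace SimpleGraph

section ParentGraph

variable {V : Type*} {r : V} {f : V → V} {ρ : V → ℕ}

def parentGraph (r : V) (f : V → V) : SimpleGraph V :=
  fromRel fun v w => v ≠ r ∧ w = f v

lemma parentGraph_adj {v w : V} :
    (parentGraph r f).Adj v w ↔ v ≠ w ∧ (v ≠ r ∧ w = f v ∨ w ≠ r ∧ v = f w) :=
  Iff.rfl

lemma parentGraph_adj_parent (hρ : ∀ v ≠ r, ρ (f v) < ρ v) {v : V} (hv : v ≠ r) :
    (parentGraph r f).Adj v (f v) :=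
  ⟨fun h => (hρ v hv).ne (congrArg ρ h.symm), Or.inl ⟨hv, rfl⟩⟩

lemma parentGraph_reachable_root (hρ : ∀ v ≠ r, ρ (f v) < ρ v) (v : V) :
    (parentGraph r f).Reachable v r := by
  induction hv : ρ v using Nat.strong_induction_on generalizing v with
  | _ n ih =>
    by_cases hvr : v = r
    · rw [hvr]
    · exact (parentGraph_adj_parent hρ hvr).reachable.trans (ih _ (hv ▸ hρ v hvr) _ rfl)

lemma parentGraph_connected (hρ : ∀ v ≠ r, ρ (f v) < ρ v) : (parentGraph r f).Connected :=
  (connected_iff _).2 ⟨fun v w => (parentGraph_reachable_root hρ v).trans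
    (parentGraph_reachable_root hρ w).symm, ⟨r⟩⟩

lemma card_edgeSet_parentGraph (hρ : ∀ v ≠ r, ρ (f v) < ρ v) :
    Nat.card (parentGraph r f).edgeSet = Nat.card {v // v ≠ r} := by
  refine (Nat.card_eq_of_bijective
    (fun v : {v // v ≠ r} => ⟨s(v.1, f v), parentGraph_adj_parent hρ v.2⟩) ⟨?_, ?_⟩).symm
  · rintro ⟨v, hv⟩ ⟨w, hw⟩ h
    rcases Sym2.eq_iff.1 (congrArg Subtype.val h) with ⟨hvw, -⟩ | ⟨hvw, hwv⟩
    · exact Subtype.ext hvw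
    · have h₁ := hρ v hv
      have h₂ := hρ w hw
      dsimp only at hvw hwv
      rw [hwv] at h₁
      rw [← hvw] at h₂
      omega
  · rintro ⟨e, he⟩
    induction e using Sym2.ind with
    | _ v w =>
      rw [mem_edgeSet, parentGraph_adj] at he
      rcases he.2 with ⟨hv, rfl⟩ | ⟨hw, rfl⟩
      · exact ⟨⟨v, hv⟩, rfl⟩
      · exact ⟨⟨w, hw⟩, Subtype.ext Sym2.eq_swap⟩

lemma isTree_parentGraph [Finite V] (hρ : ∀ v ≠ r, ρ (f v) < ρ v) :
    (parentGraph r f).IsTree := by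
  rw [isTree_iff_connected_and_card, card_edgeSet_parentGraph hρ]
  refine ⟨parentGraph_connected hρ, ?_⟩
  have := Fintype.ofFinite V
  classical
  rw [Nat.card_eq_fintype_card, Nat.card_eq_fintype_card, Fintype.card_subtype_compl,
    Fintype.card_subtype_eq]
  have := Fintype.card_pos (α := V) (h := ⟨r⟩)
  omega

end ParentGraph

lemma exists_isTree_isTree_disjoint_edgeSet {V : Type*} [Fintype V] (hV : 4 ≤ Fintype.card V) :
    ∃ T₁ T₂ : SimpleGraph V, T₁.IsTree ∧ T₂.IsTree ∧ Disjoint T₁.edgeSet T₂.edgeSet := by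
  classical
  obtain ⟨e⟩ := Function.Embedding.nonempty_of_card_le (α := Fin 4) (β := V) (by simpa using hV)
  have hab : e 0 ≠ e 1 := e.injective.ne (by decide)
  have hac : e 0 ≠ e 2 := e.injective.ne (by decide)
  have had : e 0 ≠ e 3 := e.injective.ne (by decide)
  have hbc : e 1 ≠ e 2 := e.injective.ne (by decide)
  have hbd : e 1 ≠ e 3 := e.injective.ne (by decide)
  have hcd : e 2 ≠ e 3 := e.injective.ne (by decide)
  generalize e 0 = a, e 1 = b, e 2 = c, e 3 = d at *
  -- the star at `a` with `b` moved to `c`, and the star at `b` with `c` moved to `d`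
  refine ⟨parentGraph a (fun v => if v = b then c else a),
    parentGraph b (fun v => if v = c then d else b),
    isTree_parentGraph (ρ := fun v => if v = a then 0 else if v = b then 2 else 1) ?_,
    isTree_parentGraph (ρ := fun v => if v = b then 0 else if v = c then 2 else 1) ?_, ?_⟩
  · intro v hv
    split_ifs <;> simp_all
  · intro v hv
    split_ifs <;> simp_all
  · rw [Set.disjoint_left]
    rintro ⟨x, y⟩ h₁ h₂
    simp only [mem_edgeSet, parentGraph_adj] at h₁ h₂
    grind

end SimpleGraph

open SimpleGraph

section PlaneGraphs

variable {S : Finset Pt}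

lemma IsPlaneGraph.mono {G H : SimpleGraph S} (hH : IsPlaneGraph H) (hle : G ≤ H) :
    IsPlaneGraph G :=
  fun a b c d hab hcd => hH a b c d (hle hab) (hle hcd)

lemma isPlaneGraph_parentGraph {r : S} {f : S → S}
    (h : ∀ v w, v ≠ r → w ≠ r → v ≠ w →
      openSegment ℝ (v : Pt) (f v) ∩ openSegment ℝ (w : Pt) (f w) = ∅) :
    IsPlaneGraph (parentGraph r f) := by
  intro a b c d hab hcd hne
  rw [parentGraph_adj] at hab hcd
  rcases hab.2 with ⟨ha, rfl⟩ | ⟨hb, rfl⟩ <;> rcases hcd.2 with ⟨hc, rfl⟩ | ⟨hd, rfl⟩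
  · exact h a c ha hc (by rintro rfl; exact hne rfl)
  · rw [openSegment_symm ℝ (f d : Pt)]
    exact h a d ha hd (by rintro rfl; exact hne Sym2.eq_swap)
  · rw [openSegment_symm ℝ (f b : Pt)]
    exact h b c hb hc (by rintro rfl; exact hne Sym2.eq_swap)
  · rw [openSegment_symm ℝ (f b : Pt), openSegment_symm ℝ (f d : Pt)]
    exact h b d hb hd (by rintro rfl; exact hne rfl)

lemma exists_crosses_of_not_isPlaneGraph_top (hgp : GenPos S)
    (h : ¬ IsPlaneGraph (⊤ : SimpleGraph S)) :
    ∃ p ∈ S, ∃ q ∈ S, ∃ r ∈ S, ∃ s ∈ S, Crosses p q r s := by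
  simp only [IsPlaneGraph, top_adj, not_forall] at h
  obtain ⟨⟨a, ha⟩, ⟨b, hb⟩, ⟨c, hc⟩, ⟨d, hd⟩, hab, hcd, hne, hz⟩ := h
  simp only [ne_eq, Subtype.mk.injEq, Sym2.eq_iff, not_or, not_and] at hab hcd hne
  obtain ⟨z, hz₁, hz₂⟩ := Set.nonempty_iff_ne_empty.2 hz
  have hac : a ≠ c := by
    rintro rfl
    exact hz (openSegment_inter_eq_empty_of_orient_ne_zero
      (hgp.orient_ne_zero ha hb hd hab hcd (hne.1 rfl)))
  have had : a ≠ d := by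
    rintro rfl
    rw [openSegment_symm ℝ c] at hz
    exact hz (openSegment_inter_eq_empty_of_orient_ne_zero
      (hgp.orient_ne_zero ha hb hc hab (Ne.symm hcd) (hne.2 rfl)))
  have hbc : b ≠ c := by
    rintro rfl
    rw [openSegment_symm ℝ a] at hz
    exact hz (openSegment_inter_eq_empty_of_orient_ne_zero
      (hgp.orient_ne_zero hb ha hd (Ne.symm hab) hcd had))
  have hbd : b ≠ d := by
    rintro rfl
    rw [openSegment_symm ℝ a, openSegment_symm ℝ c] at hz
    exact hz (openSegment_inter_eq_empty_of_orient_ne_zero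
      (hgp.orient_ne_zero hb ha hc (Ne.symm hab) (Ne.symm hcd) hac))
  rcases crosses_or_crosses_of_mem_openSegment hz₁ hz₂
      (hgp.orient_ne_zero hc hd ha hcd (Ne.symm hac) (Ne.symm had))
      (hgp.orient_ne_zero ha hb hc hab hac hbc) with h | h
  · exact ⟨a, ha, b, hb, c, hc, d, hd, h⟩
  · exact ⟨a, ha, b, hb, d, hd, c, hc, h⟩

end PlaneGraphs

section DoubleStar

variable {S : Finset Pt} {p q r s : Pt} {a b : S}

lemma doubleStar_eq_parentGraph (hgp : GenPos S) (hp : p ∈ S) (hq : q ∈ S) (hpq : p ≠ q) :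
    doubleStar S p q =
      parentGraph (⟨p, hp⟩ : S) fun v => if orient p q v < 0 then ⟨q, hq⟩ else ⟨p, hp⟩ := by
  have hside : ∀ v : S, (v : Pt) ≠ p → (v : Pt) ≠ q → orient p q v ≠ 0 :=
    fun v hvp hvq => hgp.orient_ne_zero hp hq v.2 hpq (Ne.symm hvp) (Ne.symm hvq)
  ext a b
  simp only [doubleStar, fromRel_adj, parentGraph_adj, Subtype.ext_iff, leftOf_iff_orient,
    rightOf_iff_orient]
  grind [orient_self_left, orient_self_right]

lemma isPlaneSpanningTree_doubleStar (hgp : GenPos S) (hp : p ∈ S) (hq : q ∈ S) (hpq : p ≠ q) :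
    IsPlaneSpanningTree (doubleStar S p q) := by
  rw [doubleStar_eq_parentGraph hgp hp hq hpq]
  refine ⟨isTree_parentGraph
    (ρ := fun v => if (v : Pt) = p then 0 else if orient p q v < 0 then 2 else 1) ?_,
    isPlaneGraph_parentGraph ?_⟩
  · intro v hv
    have hvp : (v : Pt) ≠ p := fun h => hv (Subtype.ext h)
    split_ifs <;> simp_all [Ne.symm hpq]
  · intro v w hv hw hvw
    have hvp : (v : Pt) ≠ p := fun h => hv (Subtype.ext h)
    have hwp : (w : Pt) ≠ p := fun h => hw (Subtype.ext h)
    have hvw' : (v : Pt) ≠ w := fun h => hvw (Subtype.ext h)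
    have hvq : orient p q v < 0 → (v : Pt) ≠ q := fun h h' => by simp [h'] at h
    have hwq : orient p q w < 0 → (w : Pt) ≠ q := fun h h' => by simp [h'] at h
    split_ifs with hv' hw' hw'
    · rw [openSegment_symm ℝ (v : Pt), openSegment_symm ℝ (w : Pt)]
      exact openSegment_inter_eq_empty_of_orient_ne_zero
        (hgp.orient_ne_zero hq v.2 w.2 (hvq hv').symm (hwq hw').symm hvw')
    · rw [Set.inter_comm, openSegment_symm ℝ (v : Pt)]
      exact openSegment_inter_eq_empty_of_orient (not_lt.1 hw') (by simp) (by simp) hv'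
    · rw [openSegment_symm ℝ (w : Pt)]
      exact openSegment_inter_eq_empty_of_orient (not_lt.1 hv') (by simp) (by simp) hw'
    · rw [openSegment_symm ℝ (v : Pt), openSegment_symm ℝ (w : Pt)]
      exact openSegment_inter_eq_empty_of_orient_ne_zero
        (hgp.orient_ne_zero hp v.2 w.2 (Ne.symm hvp) (Ne.symm hwp) hvw')

lemma doubleStar_adj_of_leftOf (ha : leftOf p q a) (hab : (doubleStar S p q).Adj a b) :
    (b : Pt) = p := by
  simp only [doubleStar, fromRel_adj, leftOf_iff_orient, rightOf_iff_orient] at ha hab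
  grind [orient_self_left, orient_self_right]

lemma doubleStar_adj_of_rightOf (ha : rightOf p q a) (hab : (doubleStar S p q).Adj a b) :
    (b : Pt) = q := by
  simp only [doubleStar, fromRel_adj, leftOf_iff_orient, rightOf_iff_orient] at ha hab
  grind [orient_self_left, orient_self_right]

lemma doubleStar_adj_endpoint (hab : (doubleStar S p q).Adj a b) :
    (a : Pt) = p ∨ (a : Pt) = q ∨ (b : Pt) = p ∨ (b : Pt) = q := by
  simp only [doubleStar, fromRel_adj] at hab
  tauto

lemma Crosses.left_ne (h : Crosses p q r s) : p ≠ q := by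
  rintro rfl
  simpa [leftOf_iff_orient] using h.1

lemma Crosses.right_ne (h : Crosses p q r s) : r ≠ s := by
  rintro rfl
  simpa [leftOf_iff_orient] using h.2.2.1

lemma Crosses.disjoint_edgeSet_doubleStar (h : Crosses p q r s) :
    Disjoint (doubleStar S p q).edgeSet (doubleStar S r s).edgeSet := by
  have hrs := h.right_ne
  obtain ⟨hr, hs, hq, hp⟩ := h
  have key : ∀ a b : S, (doubleStar S p q).Adj a b → (doubleStar S r s).Adj a b →
      (a : Pt) ≠ r ∧ (a : Pt) ≠ s := by
    refine fun a b h₁ h₂ => ⟨fun ha => hrs ?_, fun ha => hrs ?_⟩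
    · have hb := doubleStar_adj_of_leftOf (ha ▸ hr) h₁
      rw [← ha, doubleStar_adj_of_rightOf (hb ▸ hp) h₂.symm]
    · have hb := doubleStar_adj_of_rightOf (ha ▸ hs) h₁
      rw [← ha, doubleStar_adj_of_leftOf (hb ▸ hq) h₂.symm]
  rw [Set.disjoint_left]
  rintro ⟨a, b⟩ h₁ h₂
  rcases doubleStar_adj_endpoint h₂ with h | h | h | h
  · exact (key a b h₁ h₂).1 h
  · exact (key a b h₁ h₂).2 h
  · exact (key b a h₁.symm h₂.symm).1 h
  · exact (key b a h₁.symm h₂.symm).2 h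

end DoubleStar

/-- Every set of n ≥ 4 points in general position admits at least 2 pairwise edge-disjoint plane spanning trees. -/
theorem two_spanning_trees (S : Finset Pt) (n : ℕ) (hS : S.card = n) (hgp : GenPos S)
    (hn : 4 ≤ n) :
    ∃ T : Fin 2 → SimpleGraph {x // x ∈ S},
      (∀ i, IsPlaneSpanningTree (T i)) ∧
      (∀ i j, i ≠ j → Disjoint (T i).edgeSet (T j).edgeSet) := by
  suffices h : ∃ T₁ T₂ : SimpleGraph S, IsPlaneSpanningTree T₁ ∧ IsPlaneSpanningTree T₂ ∧
      Disjoint T₁.edgeSet T₂.edgeSet by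
    obtain ⟨T₁, T₂, h₁, h₂, h⟩ := h
    refine ⟨![T₁, T₂], fun i => ?_, fun i j hij => ?_⟩
    · fin_cases i <;> assumption
    · fin_cases i <;> fin_cases j <;> first | exact absurd rfl hij | exact h | exact h.symm
  by_cases hplane : IsPlaneGraph (⊤ : SimpleGraph S)
  · obtain ⟨T₁, T₂, h₁, h₂, h⟩ :=
      exists_isTree_isTree_disjoint_edgeSet (V := S) (by simpa [hS] using hn)
    exact ⟨T₁, T₂, ⟨h₁, hplane.mono le_top⟩, ⟨h₂, hplane.mono le_top⟩, h⟩
  · obtain ⟨p, hp, q, hq, r, hr, s, hs, h⟩ := exists_crosses_of_not_isPlaneGraph_top hgp hplane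
    exact ⟨_, _, isPlaneSpanningTree_doubleStar hgp hp hq h.left_ne,
      isPlaneSpanningTree_doubleStar hgp hr hs h.right_ne, h.disjoint_edgeSet_doubleStar⟩
end
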